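/- With the state ρ_{AB} and observables A_x, B_y defined as in the paper's Appendix D (parametrized by q ∈ [0,1]), the CHSH winning probability Q = (1/4)∑_{x,y} (1 + (−1)^{x·y} Tr[(A_x ⊗ B_y) ρ_{AB}])/2 · 2 evaluates to Q = 1/2 + (1/4)√(1+q²). -/
import Mathlib


open Matrix
open scoped Kronecker

/-- Pauli σ_z. -/
def sigmaZ : Matrix (Fin 2) (Fin 2) ℝ := !![1, 0; 0, -1]

/-- Pauli σ_x. -/
def sigmaX : Matrix (Fin 2) (Fin 2) ℝ := !![0, 1; 1, 0]

/-- Coefficient s from Appendix D. -/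
noncomputable def sCoef (q : ℝ) (x : Fin 2) : ℝ :=
  Real.sqrt ((1 / (1 + q)) * (1 + (-1 : ℝ) ^ (x : ℕ) * q / Real.sqrt (1 + q ^ 2)))

/-- Coefficient t from Appendix D. -/
noncomputable def tCoef (q : ℝ) (x : Fin 2) : ℝ :=
  Real.sqrt ((q / (1 + q)) * (1 - (-1 : ℝ) ^ (x : ℕ) / Real.sqrt (1 + q ^ 2)))

/-- Alice's observable A_x = s_x σ_z + (−1)^x t_x σ_x. -/
noncomputable def obsA (q : ℝ) (x : Fin 2) : Matrix (Fin 2) (Fin 2) ℝ :=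
  sCoef q x • sigmaZ + ((-1 : ℝ) ^ (x : ℕ) * tCoef q x) • sigmaX

/-- Bob's observable B_y = s_y σ_z − (−1)^y t_y σ_x. -/
noncomputable def obsB (q : ℝ) (y : Fin 2) : Matrix (Fin 2) (Fin 2) ℝ :=
  sCoef q y • sigmaZ - ((-1 : ℝ) ^ (y : ℕ) * tCoef q y) • sigmaX

/-- The state ρ_AB of Appendix D, as a real 4×4 matrix indexed by `Fin 2 × Fin 2`. -/
noncomputable def rhoAB (q : ℝ) : Matrix (Fin 2 × Fin 2) (Fin 2 × Fin 2) ℝ :=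
  Matrix.of fun i j =>
    if i = ((0 : Fin 2), (0 : Fin 2)) ∧ j = ((0 : Fin 2), (0 : Fin 2)) then
      (1 + Real.sqrt (1 - q ^ 2)) / 2
    else if i = ((1 : Fin 2), (1 : Fin 2)) ∧ j = ((1 : Fin 2), (1 : Fin 2)) then
      (1 - Real.sqrt (1 - q ^ 2)) / 2
    else if (i = ((0 : Fin 2), (0 : Fin 2)) ∧ j = ((1 : Fin 2), (1 : Fin 2))) ∨
            (i = ((1 : Fin 2), (1 : Fin 2)) ∧ j = ((0 : Fin 2), (0 : Fin 2))) then
      q / 2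
    else 0

/-- Correlator E(x,y) = Tr[(A_x ⊗ B_y) ρ_AB]. -/
noncomputable def corr (q : ℝ) (x y : Fin 2) : ℝ :=
  ((obsA q x ⊗ₖ obsB q y) * rhoAB q).trace

lemma corr_eq (q : ℝ) (x y : Fin 2) :
    corr q x y = sCoef q x * sCoef q y
      - (-1:ℝ)^(x:ℕ) * (-1:ℝ)^(y:ℕ) * q * (tCoef q x * tCoef q y) := by
  simp [corr, Matrix.trace, Matrix.mul_apply, Fintype.sum_prod_type, Fin.sum_univ_two,
    rhoAB, obsA, obsB, sigmaZ, sigmaX, kroneckerMap_apply, Matrix.of_apply, Prod.ext_iff]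
  ring

/-- The CHSH winning probability of the Appendix-D strategy equals
1/2 + (1/4)√(1+q²). -/
theorem chsh_value_of_appendix_strategy (q : ℝ) (hq0 : 0 ≤ q) (hq1 : q ≤ 1) :
    1 / 2 + (corr q 0 0 + corr q 0 1 + corr q 1 0 - corr q 1 1) / 8
      = 1 / 2 + Real.sqrt (1 + q ^ 2) / 4 := by
  set r := Real.sqrt (1 + q ^ 2) with hr
  have hrpos : 0 < r := Real.sqrt_pos.mpr (by nlinarith)
  have hrne : r ≠ 0 := ne_of_gt hrpos
  have hr2 : r ^ 2 = 1 + q ^ 2 := Real.sq_sqrt (by nlinarith)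
  have hqr : q ≤ r := by
    rw [hr]
    calc q = Real.sqrt (q ^ 2) := by rw [Real.sqrt_sq hq0]
    _ ≤ Real.sqrt (1 + q ^ 2) := Real.sqrt_le_sqrt (by nlinarith)
  have h1r : 1 ≤ r := by
    rw [hr]
    calc (1:ℝ) = Real.sqrt 1 := by simp
    _ ≤ Real.sqrt (1 + q ^ 2) := Real.sqrt_le_sqrt (by nlinarith)
  have h1q : (0:ℝ) < 1 + q := by linarith
  have h1qne : (1:ℝ) + q ≠ 0 := ne_of_gt h1q
  have hA0 : (0:ℝ) ≤ 1 + q / r := by positivity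
  have hA1 : (0:ℝ) ≤ 1 - q / r := by
    rw [sub_nonneg, div_le_one hrpos]; exact hqr
  have hB0 : (0:ℝ) ≤ 1 - 1 / r := by
    rw [sub_nonneg, div_le_one hrpos]; exact h1r
  have hB1 : (0:ℝ) ≤ 1 + 1 / r := by positivity
  -- arguments of the square roots in closed form
  have hargs0 : (1 / (1 + q)) * (1 + (-1:ℝ)^(((0:Fin 2)):ℕ) * q / Real.sqrt (1+q^2))
      = (1/(1+q)) * (1 + q / r) := by norm_num [← hr]
  have hargs1 : (1 / (1 + q)) * (1 + (-1:ℝ)^(((1:Fin 2)):ℕ) * q / Real.sqrt (1+q^2))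
      = (1/(1+q)) * (1 - q / r) := by norm_num [← hr]; exact Or.inl (by ring)
  have hargt0 : (q / (1 + q)) * (1 - (-1:ℝ)^(((0:Fin 2)):ℕ) / Real.sqrt (1+q^2))
      = (q/(1+q)) * (1 - 1 / r) := by norm_num [← hr]
  have hargt1 : (q / (1 + q)) * (1 - (-1:ℝ)^(((1:Fin 2)):ℕ) / Real.sqrt (1+q^2))
      = (q/(1+q)) * (1 + 1 / r) := by norm_num [← hr]; exact Or.inl (by ring)
  have hs0 : sCoef q 0 ^ 2 = (1/(1+q)) * (1 + q / r) := by
    rw [sCoef, hargs0, Real.sq_sqrt (mul_nonneg (by positivity) hA0)]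
  have hs1 : sCoef q 1 ^ 2 = (1/(1+q)) * (1 - q / r) := by
    rw [sCoef, hargs1, Real.sq_sqrt (mul_nonneg (by positivity) hA1)]
  have ht0 : tCoef q 0 ^ 2 = (q/(1+q)) * (1 - 1 / r) := by
    rw [tCoef, hargt0, Real.sq_sqrt (mul_nonneg (by positivity) hB0)]
  have ht1 : tCoef q 1 ^ 2 = (q/(1+q)) * (1 + 1 / r) := by
    rw [tCoef, hargt1, Real.sq_sqrt (mul_nonneg (by positivity) hB1)]
  have hprodS : (1 + q / r) * (1 - q / r) = 1 / r ^ 2 := by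
    field_simp
    first
    | linear_combination hr2
    | linear_combination (r^2 - 1) * hr2
    | linear_combination r^2 * hr2
    | linear_combination (r^2 + 1) * hr2
  have hprodT : (1 - 1 / r) * (1 + 1 / r) = q ^ 2 / r ^ 2 := by
    field_simp
    first
    | linear_combination hr2
    | linear_combination (r^2 - 1) * hr2
    | linear_combination r^2 * hr2
    | linear_combination (r^2 + 1) * hr2
  have hs01 : sCoef q 0 * sCoef q 1 = 1 / ((1+q) * r) := by
    rw [sCoef, sCoef, hargs0, hargs1, ← Real.sqrt_mul (mul_nonneg (by positivity) hA0)]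
    have : (1/(1+q)) * (1 + q / r) * ((1/(1+q)) * (1 - q / r)) = (1 / ((1+q) * r))^2 := by
      rw [show (1/(1+q)) * (1 + q / r) * ((1/(1+q)) * (1 - q / r))
          = (1/(1+q))^2 * ((1 + q / r) * (1 - q / r)) by ring, hprodS]
      field_simp
    rw [this, Real.sqrt_sq (by positivity)]
  have ht01 : tCoef q 0 * tCoef q 1 = q^2 / ((1+q) * r) := by
    rw [tCoef, tCoef, hargt0, hargt1, ← Real.sqrt_mul (mul_nonneg (by positivity) hB0)]
    have : (q/(1+q)) * (1 - 1 / r) * ((q/(1+q)) * (1 + 1 / r)) = (q^2 / ((1+q) * r))^2 := by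
      rw [show (q/(1+q)) * (1 - 1 / r) * ((q/(1+q)) * (1 + 1 / r))
          = (q/(1+q))^2 * ((1 - 1 / r) * (1 + 1 / r)) by ring, hprodT]
      field_simp
    rw [this, Real.sqrt_sq (by positivity)]
  simp only [corr_eq]
  norm_num
  rw [show sCoef q 0 * sCoef q 0 = sCoef q 0 ^ 2 by ring,
    show sCoef q 1 * sCoef q 1 = sCoef q 1 ^ 2 by ring,
    show tCoef q 0 * tCoef q 0 = tCoef q 0 ^ 2 by ring,
    show tCoef q 1 * tCoef q 1 = tCoef q 1 ^ 2 by ring,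
    show tCoef q 1 * tCoef q 0 = tCoef q 0 * tCoef q 1 by ring,
    show sCoef q 1 * sCoef q 0 = sCoef q 0 * sCoef q 1 by ring,
    hs0, hs1, ht0, ht1, hs01, ht01]
  field_simp
  first
  | linear_combination (-(8:ℝ) * (1+q) * (1+r)) * hr2
  | linear_combination ((8:ℝ) * (1+q) * (1+r)) * hr2
  | linear_combination ((8:ℝ) * r * (1+q)) * hr2
  | linear_combination (-(8:ℝ) * r * (1+q)) * hr2
  | linear_combination ((8:ℝ) * (1+q)) * hr2
  | linear_combination (-(8:ℝ) * (1+q)) * hr2
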